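/- arXiv:1010.6261 — 3 statements merged into one kernel-verified Lean document; each statement's English description precedes it below -/
import Mathlib

section
/- If π is a minimal permutation with d descents (d ≥ 1) of length n, then d + 1 ≤ n ≤ 2d. In particular, f_d(n) = 0 whenever n < d + 1 or n > 2d. -/
/-- `i` (1-based) is a descent of the word `w`, i.e. `1 ≤ i ≤ w.length - 1` and
`w_i > w_{i+1}` (1-based entries). -/
def DescentAt (w : List ℕ) (i : ℕ) : Prop :=
  1 ≤ i ∧ i + 1 ≤ w.length ∧ w.getD i 0 < w.getD (i - 1) 0

instance (w : List ℕ) (i : ℕ) : Decidable (DescentAt w i) :=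
  inferInstanceAs (Decidable (_ ∧ _ ∧ _))

/-- `i` (1-based) is an ascent of the word `w`. -/
def AscentAt (w : List ℕ) (i : ℕ) : Prop :=
  1 ≤ i ∧ i + 1 ≤ w.length ∧ w.getD (i - 1) 0 < w.getD i 0

instance (w : List ℕ) (i : ℕ) : Decidable (AscentAt w i) :=
  inferInstanceAs (Decidable (_ ∧ _ ∧ _))

/-- The set of descent positions of `w`. -/
def descents (w : List ℕ) : Finset ℕ :=
  (Finset.range w.length).filter (fun i => DescentAt w i)

/-- `w` is a permutation of `[n] = {1,…,n}`, written as a word. -/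
def IsPermWord (n : ℕ) (w : List ℕ) : Prop :=
  w.length = n ∧ w.Nodup ∧ ∀ x ∈ w, 1 ≤ x ∧ x ≤ n

/-- Two words of distinct entries are in the same relative order. -/
def SameRelOrder (u v : List ℕ) : Prop :=
  u.length = v.length ∧
    ∀ p q, p < u.length → q < u.length →
      (u.getD p 0 < u.getD q 0 ↔ v.getD p 0 < v.getD q 0)

/-- `σ ≺ w`: the word `w` contains the pattern `σ`, i.e. `w` has a subsequence
in the same relative order as `σ`. -/
def ContainsPattern (σ w : List ℕ) : Prop :=
  ∃ s : List ℕ, s.Sublist w ∧ SameRelOrder s σ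

/-- `w` is a minimal permutation with `d` descents: it has exactly `d` descents and
no strictly shorter permutation with exactly `d` descents occurs in it as a pattern. -/
def MinimalPerm (d : ℕ) (w : List ℕ) : Prop :=
  (descents w).card = d ∧
    ∀ (m : ℕ) (σ : List ℕ), IsPermWord m σ → m < w.length →
      (descents σ).card = d → ¬ ContainsPattern σ w

/-- `w` is a minimal permutation (with its own number of descents). -/
def IsMinimal (w : List ℕ) : Prop :=
  MinimalPerm (descents w).card w

/-- The set `𝓕_d(n)` of minimal permutations of length `n` with `d` descents. -/
def minimalPerms (d n : ℕ) : Set (List ℕ) :=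
  {w | IsPermWord n w ∧ MinimalPerm d w}

/-- `f_d(n) = |𝓕_d(n)|`. -/
noncomputable def fCount (d n : ℕ) : ℕ :=
  (minimalPerms d n).ncard

/-- `w` has ascent sequence `a`: `w` decomposes into maximal strictly decreasing
runs whose lengths, from left to right, are the entries of `a` (maximality is
expressed by the junctions between consecutive runs being ascents). -/
def HasAscentSeq (w a : List ℕ) : Prop :=
  ∃ bs : List (List ℕ), bs.flatten = w ∧ bs.map List.length = a ∧
    (∀ b ∈ bs, b ≠ [] ∧ List.Chain' (fun x y => x > y) b) ∧
    List.Chain' (fun b c => ∃ x ∈ b.getLast?, ∃ y ∈ c.head?, x < y) bs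

/-- The set `𝓕_{a₁,…,a_k}(n)` of minimal permutations of length `n` with
ascent sequence `a = (a₁,…,a_k)`. -/
def minimalPermsAsc (n : ℕ) (a : List ℕ) : Set (List ℕ) :=
  {w | IsPermWord n w ∧ IsMinimal w ∧ HasAscentSeq w a}

/-- `F_{a₁,…,a_k}(n) = |𝓕_{a₁,…,a_k}(n)|`. -/
noncomputable def FCount (n : ℕ) (a : List ℕ) : ℕ :=
  (minimalPermsAsc n a).ncard

/-- A standard filling of a given cell set by `1,…,N`: zero off the cells,
a bijection from the cells onto `{1,…,N}`, strictly increasing along rows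
(second coordinate) and columns (first coordinate). -/
def IsTableauOn (cell : ℕ → ℕ → Prop) (N : ℕ) (T : ℕ → ℕ → ℕ) : Prop :=
  (∀ r c, ¬ cell r c → T r c = 0) ∧
  (∀ r c, cell r c → 1 ≤ T r c ∧ T r c ≤ N) ∧
  (∀ r c r' c', cell r c → cell r' c' → T r c = T r' c' → r = r' ∧ c = c') ∧
  (∀ v, 1 ≤ v → v ≤ N → ∃ r c, cell r c ∧ T r c = v) ∧
  (∀ r c, cell r c → cell r (c + 1) → T r c < T r (c + 1)) ∧
  (∀ r c, cell r c → cell (r + 1) c → T r c < T (r + 1) c)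

/-- The cells of the skew shape `λ/μ` (rows indexed from `0` downward,
columns from `0` rightward): row `r` contains columns `μ_r ≤ c < λ_r`. -/
def skewCell (l m : List ℕ) (r c : ℕ) : Prop :=
  r < l.length ∧ m.getD r 0 ≤ c ∧ c < l.getD r 0

/-- A standard skew Young tableau of shape `λ/μ`. -/
def IsSkewSYT (l m : List ℕ) (T : ℕ → ℕ → ℕ) : Prop :=
  IsTableauOn (skewCell l m) (l.sum - m.sum) T

/-- `f^{λ/μ}`, the number of standard skew Young tableaux of shape `λ/μ`. -/
noncomputable def skewSYTCount (l m : List ℕ) : ℕ :=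
  Nat.card {T : ℕ → ℕ → ℕ // IsSkewSYT l m T}

/-- The row index of the top cell of column `c` in the 2-regular skew shape
with column lengths `a₁,…,a_k` (columns normalized so that the last column
starts in row `0`; consecutive columns overlap in exactly two rows). -/
def colTop (a : List ℕ) (c : ℕ) : ℕ :=
  (a.drop (c + 1)).sum - 2 * (a.length - 1 - c)

/-- The cells of the 2-regular skew shape with column lengths `a₁,…,a_k`:
column `c` occupies the `a_c` rows starting at `colTop a c`, so that any two
consecutive columns overlap in exactly two rows. -/
def twoRegCell (a : List ℕ) (r c : ℕ) : Prop :=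
  c < a.length ∧ colTop a c ≤ r ∧ r < colTop a c + a.getD c 0

/-- A 2-regular skew tableau with column lengths `a₁,…,a_k`: a standard filling
of the 2-regular skew shape by `1,…,a₁+⋯+a_k`. -/
def Is2RegularTableau (a : List ℕ) (T : ℕ → ℕ → ℕ) : Prop :=
  IsTableauOn (twoRegCell a) a.sum T

/-- `𝓜_{2n+1,2i}`: minimal permutations of length `2n+1` with `n+1` descents whose
unique pair of consecutive descents is `(2i-1, 2i)`. -/
def Mset (n i : ℕ) : Set (List ℕ) :=
  {w | IsPermWord (2 * n + 1) w ∧ MinimalPerm (n + 1) w ∧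
    DescentAt w (2 * i - 1) ∧ DescentAt w (2 * i) ∧
    ∀ j, DescentAt w j → DescentAt w (j + 1) → j = 2 * i - 1}

/-- Elementary Knuth transformations on words of distinct integers. -/
inductive KnuthStep : List ℕ → List ℕ → Prop
  | k1 (u v : List ℕ) (x y z : ℕ) (hxy : x < y) (hyz : y < z) :
      KnuthStep (u ++ [x, z, y] ++ v) (u ++ [z, x, y] ++ v)
  | k2 (u v : List ℕ) (x y z : ℕ) (hxy : x < y) (hyz : y < z) :
      KnuthStep (u ++ [y, x, z] ++ v) (u ++ [y, z, x] ++ v)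

/-- Knuth equivalence of words. -/
def KnuthEquiv : List ℕ → List ℕ → Prop := Relation.EqvGen KnuthStep

/-!
Descents of a word lie in positions `1, …, n - 1`, which gives `d + 1 ≤ n`. For the upper bound,
a word with `d` descents and at least `2d + 1` entries has an entry whose deletion keeps the
number of descents: delete the first entry if the word starts with an ascent, and otherwise find,
by an induction along the word, a deletion that keeps both the first entry and the descent count.
The standardization of the shorter word is then a shorter permutation with `d` descents contained
in the original one, against minimality.
-/

open Finset

section Descents

lemma descentAt_cons_cons_succ_succ (a b : ℕ) (t : List ℕ) (i : ℕ) :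
    DescentAt (a :: b :: t) (i + 2) ↔ DescentAt (b :: t) (i + 1) := by
  simp [DescentAt]

lemma card_descents_cons_cons (a b : ℕ) (t : List ℕ) :
    (descents (a :: b :: t)).card = (if b < a then 1 else 0) + (descents (b :: t)).card := by
  simp only [descents, card_filter, List.length_cons, sum_range_succ',
    descentAt_cons_cons_succ_succ]
  simp [DescentAt]
  omega

lemma descents_singleton (a : ℕ) : descents [a] = ∅ := by
  simp [descents, DescentAt]

lemma card_descents_le_length_sub_one (w : List ℕ) : (descents w).card ≤ w.length - 1 := by
  calc (descents w).card ≤ (Ico 1 w.length).card :=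
        card_le_card fun i hi => by simp_all [descents, DescentAt]
    _ = w.length - 1 := Nat.card_Ico 1 w.length

lemma descents_eq_of_sameRelOrder {u v : List ℕ} (h : SameRelOrder u v) :
    descents u = descents v := by
  obtain ⟨hlen, hrel⟩ := h
  ext i
  rw [descents, descents, mem_filter, mem_filter, mem_range, mem_range, ← hlen]
  unfold DescentAt
  rw [← hlen]
  refine and_congr_right fun hi => and_congr_right fun h1 => and_congr_right fun _ => ?_
  exact hrel i (i - 1) hi (by omega)

end Descents

section Standardization

lemma sameRelOrder_map_of_strictMonoOn {f : ℕ → ℕ} {s : List ℕ}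
    (hf : StrictMonoOn f {x | x ∈ s}) : SameRelOrder s (s.map f) := by
  refine ⟨(List.length_map f).symm, fun p q hp hq => ?_⟩
  have hp' : p < (s.map f).length := by rwa [List.length_map]
  have hq' : q < (s.map f).length := by rwa [List.length_map]
  simp only [List.getD_eq_getElem _ _ hp, List.getD_eq_getElem _ _ hq,
    List.getD_eq_getElem _ _ hp', List.getD_eq_getElem _ _ hq', List.getElem_map]
  exact (hf.lt_iff_lt (List.getElem_mem hp) (List.getElem_mem hq)).symm

def rankIn (s : List ℕ) (x : ℕ) : ℕ := (s.toFinset.filter (· ≤ x)).card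

lemma strictMonoOn_rankIn (s : List ℕ) : StrictMonoOn (rankIn s) {x | x ∈ s} := by
  intro x _ y hy hxy
  refine card_lt_card ⟨monotone_filter_right _ fun z _ hz => hz.trans hxy.le, fun hsub => ?_⟩
  have := hsub (mem_filter.mpr ⟨List.mem_toFinset.mpr hy, le_rfl⟩)
  simp only [mem_filter] at this
  omega

def standardize (s : List ℕ) : List ℕ := s.map (rankIn s)

lemma sameRelOrder_standardize (s : List ℕ) : SameRelOrder s (standardize s) :=
  sameRelOrder_map_of_strictMonoOn (strictMonoOn_rankIn s)

lemma isPermWord_standardize {s : List ℕ} (hs : s.Nodup) :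
    IsPermWord s.length (standardize s) := by
  refine ⟨List.length_map _, hs.map_on fun x hx y hy => (strictMonoOn_rankIn s).injOn hx hy, ?_⟩
  simp only [standardize, List.mem_map, forall_exists_index, and_imp]
  rintro _ x hx rfl
  refine ⟨card_pos.mpr ⟨x, by simp [hx]⟩, ?_⟩
  exact (card_filter_le _ _).trans (List.toFinset_card_of_nodup hs).le

end Standardization

lemma MinimalPerm.card_descents_ne_of_sublist {d : ℕ} {w s : List ℕ} (hw : MinimalPerm d w)
    (hnd : w.Nodup) (hs : s.Sublist w) (hlt : s.length < w.length) : (descents s).card ≠ d := by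
  intro hd
  refine hw.2 _ _ (isPermWord_standardize (hs.nodup hnd)) hlt ?_
    ⟨s, hs, sameRelOrder_standardize s⟩
  rw [← descents_eq_of_sameRelOrder (sameRelOrder_standardize s), hd]

section Deletion

lemma card_descents_cons_of_head?_eq {s : List ℕ} {b : ℕ} (a : ℕ) (hs : s.head? = some b) :
    (descents (a :: s)).card = (if b < a then 1 else 0) + (descents s).card := by
  obtain ⟨r, rfl⟩ : ∃ r, s = b :: r := List.head?_eq_some_iff.mp hs
  exact card_descents_cons_cons a b r

lemma exists_deletion_head?_eq_card_descents_eq :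
    ∀ l : List ℕ, 2 * (descents l).card + 2 ≤ l.length →
      ∃ s : List ℕ, s.Sublist l ∧ s.length + 1 = l.length ∧ s.head? = l.head? ∧
        (descents s).card = (descents l).card
  | [], h | [_], h => by simp at h
  | [a, b], h => by
    have hab : ¬ b < a := by
      intro hba
      simp [card_descents_cons_cons, hba] at h
    exact ⟨[a], by simp, rfl, rfl, by simp [card_descents_cons_cons, hab, descents_singleton]⟩
  | a :: b :: c :: t, h => by
    rw [card_descents_cons_cons] at h ⊢
    by_cases hba : b < a
    · simp only [hba, if_true, List.length_cons] at h
      obtain ⟨s, hs, hlen, hhead, hcard⟩ :=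
        exists_deletion_head?_eq_card_descents_eq (b :: c :: t)
          (by simp only [List.length_cons]; omega)
      refine ⟨a :: s, hs.cons_cons a, by simp [hlen], rfl, ?_⟩
      rw [card_descents_cons_of_head?_eq a hhead, hcard]
    simp only [hba, if_false, zero_add] at h ⊢
    rw [card_descents_cons_cons] at h ⊢
    by_cases hcb : c < b
    · simp only [hcb, if_true, List.length_cons] at h ⊢
      obtain ⟨s, hs, hlen, hhead, hcard⟩ :=
        exists_deletion_head?_eq_card_descents_eq (c :: t)
          (by simp only [List.length_cons]; omega)
      refine ⟨a :: b :: s, (hs.cons_cons b).cons_cons a, by simp [hlen], rfl, ?_⟩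
      rw [card_descents_cons_cons, card_descents_cons_of_head?_eq b hhead, hcard, if_neg hba,
        if_pos hcb, zero_add]
    · refine ⟨a :: c :: t, (List.sublist_cons_self b _).cons_cons a, by simp, rfl, ?_⟩
      rw [card_descents_cons_cons, if_neg (by omega : ¬ c < a), if_neg hcb]

lemma exists_deletion_card_descents_eq :
    ∀ l : List ℕ, 2 * (descents l).card + 1 ≤ l.length →
      ∃ s : List ℕ, s.Sublist l ∧ s.length + 1 = l.length ∧
        (descents s).card = (descents l).card
  | [], h => by simp at h
  | [a], _ => ⟨[], by simp, rfl, by rw [descents_singleton]; rfl⟩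
  | a :: b :: t, h => by
    rw [card_descents_cons_cons] at h ⊢
    by_cases hba : b < a
    · obtain ⟨s, hs, hlen, hhead, hcard⟩ :=
        exists_deletion_head?_eq_card_descents_eq (b :: t) (by
          simp only [List.length_cons, hba, if_true] at h ⊢; omega)
      refine ⟨a :: s, hs.cons_cons a, by simp [hlen], ?_⟩
      rw [card_descents_cons_of_head?_eq a hhead, hcard]
    · exact ⟨b :: t, List.sublist_cons_self a _, rfl, by simp [hba]⟩

end Deletion

/-- every minimal permutation with `d ≥ 1` descents has length `n` with
`d + 1 ≤ n ≤ 2d`; in particular `f_d(n) = 0` whenever `n < d + 1` or `n > 2d`. -/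
theorem minimalPerm_length_bounds (d : ℕ) (hd : 1 ≤ d) :
    (∀ n w, IsPermWord n w → MinimalPerm d w → d + 1 ≤ n ∧ n ≤ 2 * d) ∧
      (∀ n, n < d + 1 ∨ 2 * d < n → fCount d n = 0) := by
  have bounds : ∀ n w, IsPermWord n w → MinimalPerm d w → d + 1 ≤ n ∧ n ≤ 2 * d := by
    rintro n w ⟨rfl, hnd, -⟩ hw
    have hcard := hw.1
    have hlow := card_descents_le_length_sub_one w
    refine ⟨by omega, ?_⟩
    by_contra! hlong
    obtain ⟨s, hs, hlen, hs_card⟩ := exists_deletion_card_descents_eq w (by omega)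
    exact hw.card_descents_ne_of_sublist hnd hs (by omega) (hs_card.trans hcard)
  refine ⟨bounds, fun n hn => ?_⟩
  have hempty : minimalPerms d n = ∅ :=
    Set.eq_empty_of_forall_notMem fun w hw => by have := bounds n w hw.1 hw.2; omega
  rw [fCount, hempty, Set.ncard_empty]
end

section
/- Let (a₁, a₂, …, a_k) be a sequence of positive integers with a₁ + a₂ + ⋯ + a_k = n and a_i ≥ 2 for all i. Then there is a bijection between the set 𝓕_{a₁,…,a_k}(n) of minimal permutations of length n with ascent sequence (a₁,…,a_k) and the set 𝓟_{a₁,…,a_k}(n) of 2-regular skew tableaux with column lengths a₁,…,a_k; in particular these two sets have the same cardinality. -/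
/-!
Cut a word into consecutive runs of lengths `a₁, …, a_k` and write run `c` into column `c` of the
2-regular shape, bottom to top. The word has ascent sequence `a` exactly when the runs decrease and
every junction between runs is an ascent, i.e. when the columns increase.

A permutation is minimal exactly when deleting any single letter loses a descent. In such a word
every deletion does so, except possibly those of the last letter of run `c` and of the first letter
of run `c + 1`; these lose a descent iff the penultimate letter of run `c` is smaller than the first
letter of run `c + 1`, resp. the last letter of run `c` is smaller than the second letter of
run `c + 1`. These are precisely the row conditions in the two rows where columns `c` and `c + 1`
overlap, so reading columns is a bijection between the two sets.
-/

theorem List.Sublist.exists_sublist_eraseIdx {α : Type*} {s w : List α} (h : s.Sublist w)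
    (hlt : s.length < w.length) : ∃ p < w.length, s.Sublist (w.eraseIdx p) := by
  induction h with
  | slnil => simp at hlt
  | cons b h => exact ⟨0, by simp, h⟩
  | cons_cons b h ih =>
    obtain ⟨p, hp, hs⟩ := ih (by simpa using hlt)
    exact ⟨p + 1, by simpa using hp, hs.cons_cons b⟩

open Finset

namespace MinimalPermTableau

/-! ### Descents under deletion of a letter -/

theorem descentAt_iff {w : List ℕ} {p : ℕ} :
    DescentAt w p ↔ 0 < p ∧ p < w.length ∧ w.getD p 0 < w.getD (p - 1) 0 := by
  simp only [DescentAt]; omega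

theorem not_descentAt_zero (w : List ℕ) : ¬ DescentAt w 0 := by
  simp [descentAt_iff]

theorem not_descentAt_of_length_le {w : List ℕ} {p : ℕ} (hp : w.length ≤ p) :
    ¬ DescentAt w p := by
  simp [descentAt_iff]; omega

theorem descentAt_cons_succ (x : ℕ) (l : List ℕ) {i : ℕ} (hi : 1 ≤ i) :
    DescentAt (x :: l) (i + 1) ↔ DescentAt l i := by
  obtain ⟨i, rfl⟩ : ∃ k, i = k + 1 := ⟨i - 1, by omega⟩
  simp [DescentAt]

theorem card_descents_cons (x : ℕ) (l : List ℕ) :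
    #(descents (x :: l)) = (if DescentAt (x :: l) 1 then 1 else 0) + #(descents l) := by
  simp only [descents, card_filter, List.length_cons, sum_range_succ', not_descentAt_zero,
    if_false, add_zero]
  rcases l with _ | ⟨y, l⟩
  · simp [not_descentAt_of_length_le]
  · simp only [List.length_cons, sum_range_succ', not_descentAt_zero, if_false, add_zero,
      Nat.zero_add, descentAt_cons_succ x _ (Nat.le_add_left 1 _)]
    omega

/-- Deleting the letter at position `p` destroys the descents `(p-1, p)` and `(p, p+1)` and may
create the descent `(p-1, p+1)`; all other descents are shifted. -/
theorem card_descents_eraseIdx_add {w : List ℕ} {p : ℕ} (hp : p < w.length) :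
    #(descents w) + (if DescentAt (w.eraseIdx p) p then 1 else 0) =
      #(descents (w.eraseIdx p)) + (if DescentAt w p then 1 else 0) +
        (if DescentAt w (p + 1) then 1 else 0) := by
  induction w generalizing p with
  | nil => simp at hp
  | cons x l ih =>
    rcases p with _ | _ | p
    · simp [card_descents_cons, not_descentAt_zero, add_comm]
    · rcases l with _ | ⟨y, l⟩
      · simp [not_descentAt_of_length_le]
      · simp only [List.eraseIdx_cons_succ, List.eraseIdx_cons_zero, card_descents_cons]
        simp [DescentAt]
        omega
    · have ih := ih (p := p + 1) (by simpa using hp)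
      rcases l with _ | ⟨y, l⟩
      · simp at hp
      · have h1 : DescentAt (x :: y :: l.eraseIdx p) 1 ↔ DescentAt (x :: y :: l) 1 := by
          simp [DescentAt]
        simp only [List.eraseIdx_cons_succ] at ih ⊢
        simp only [card_descents_cons x, h1, descentAt_cons_succ x _ (Nat.le_add_left 1 _)]
        grind

theorem getD_eraseIdx (w : List ℕ) (p i : ℕ) :
    (w.eraseIdx p).getD i 0 = if i < p then w.getD i 0 else w.getD (i + 1) 0 := by
  simp only [List.getD_eq_getElem?_getD, List.getElem?_eraseIdx]
  split_ifs <;> rfl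

theorem descentAt_eraseIdx_iff {w : List ℕ} {p : ℕ} :
    DescentAt (w.eraseIdx p) p ↔
      0 < p ∧ p + 1 < w.length ∧ w.getD (p + 1) 0 < w.getD (p - 1) 0 := by
  rw [descentAt_iff, getD_eraseIdx, getD_eraseIdx, List.length_eraseIdx]
  constructor
  · rintro ⟨h0, hl, hlt⟩
    split_ifs at hl hlt <;> omega
  · rintro ⟨h0, hl, hlt⟩
    refine ⟨h0, by split_ifs <;> omega, ?_⟩
    rwa [if_neg (lt_irrefl p), if_pos (by omega)]

theorem card_descents_eraseIdx_le (w : List ℕ) (p : ℕ) :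
    #(descents (w.eraseIdx p)) ≤ #(descents w) := by
  rcases lt_or_ge p w.length with hp | hp
  · have hnew : DescentAt (w.eraseIdx p) p → DescentAt w p ∨ DescentAt w (p + 1) := by
      rw [descentAt_eraseIdx_iff, descentAt_iff, descentAt_iff, Nat.add_sub_cancel]
      omega
    have := card_descents_eraseIdx_add hp
    split_ifs at this <;> first | omega | tauto
  · rw [List.eraseIdx_of_length_le hp]

theorem card_descents_eraseIdx_lt_of_descentAt {w : List ℕ} {p : ℕ} (h : DescentAt w p)
    (h' : DescentAt w (p + 1)) : #(descents (w.eraseIdx p)) < #(descents w) := by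
  have := card_descents_eraseIdx_add (descentAt_iff.1 h).2.1
  rw [if_pos h, if_pos h'] at this
  split_ifs at this <;> omega

theorem card_descents_eraseIdx_lt_iff_of_xor {w : List ℕ} {p : ℕ} (hp : p < w.length)
    (h : Xor (DescentAt w p) (DescentAt w (p + 1))) :
    #(descents (w.eraseIdx p)) < #(descents w) ↔ ¬ DescentAt (w.eraseIdx p) p := by
  have := card_descents_eraseIdx_add hp
  rcases h with ⟨h1, h2⟩ | ⟨h1, h2⟩ <;>
  · rw [if_pos h1, if_neg h2] at this
    split_ifs at this with h3 <;> simp [h3] <;> omega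

theorem getD_ne_getD_of_nodup {w : List ℕ} (hw : w.Nodup) {p q : ℕ} (hp : p < w.length)
    (hq : q < w.length) (hpq : p ≠ q) : w.getD p 0 ≠ w.getD q 0 := by
  rw [List.getD_eq_getElem _ _ hp, List.getD_eq_getElem _ _ hq]
  exact fun h => hpq ((hw.getElem_inj_iff).1 h)

theorem not_descentAt_eraseIdx_iff {w : List ℕ} (hw : w.Nodup) {p : ℕ} (hp : 0 < p)
    (hp' : p + 1 < w.length) :
    ¬ DescentAt (w.eraseIdx p) p ↔ w.getD (p - 1) 0 < w.getD (p + 1) 0 := by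
  have := getD_ne_getD_of_nodup hw (p := p - 1) (q := p + 1) (by omega) hp' (by omega)
  rw [descentAt_eraseIdx_iff]
  omega

/-! ### Minimal permutations -/

theorem card_descents_le_of_sublist {s w : List ℕ} (h : s.Sublist w) :
    #(descents s) ≤ #(descents w) := by
  induction hn : w.length - s.length generalizing w with
  | zero => rw [h.eq_of_length_le (by omega)]
  | succ n ih =>
    obtain ⟨p, hp, hs⟩ := h.exists_sublist_eraseIdx (by omega)
    exact (ih hs (by rw [List.length_eraseIdx_of_lt hp]; omega)).trans
      (card_descents_eraseIdx_le w p)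

theorem descents_eq_of_sameRelOrder {s t : List ℕ} (h : SameRelOrder s t) :
    descents s = descents t := by
  rw [descents, descents, ← h.1]
  refine filter_congr fun i _ => ?_
  simp only [descentAt_iff, ← h.1]
  exact and_congr_right fun _ => and_congr_right fun hi => h.2 i (i - 1) hi (by omega)

theorem isPermWord_iff_forall_mem {n : ℕ} {w : List ℕ} (hlen : w.length = n)
    (hb : ∀ x ∈ w, 1 ≤ x ∧ x ≤ n) : IsPermWord n w ↔ ∀ v, 1 ≤ v → v ≤ n → v ∈ w := by
  have hsub : w.toFinset ⊆ Icc 1 n := fun x hx => by simpa using hb x (List.mem_toFinset.1 hx)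
  have hcard : #(Icc 1 n) = w.length := by simp [hlen]
  constructor
  · rintro ⟨-, hnd, -⟩ v h1 h2
    have := eq_of_subset_of_card_le hsub (by rw [hcard, List.toFinset_card_of_nodup hnd])
    rw [← List.mem_toFinset, this, mem_Icc]
    exact ⟨h1, h2⟩
  · intro hall
    refine ⟨hlen, ?_, hb⟩
    have := card_le_card fun v hv => List.mem_toFinset.2 (hall v (mem_Icc.1 hv).1 (mem_Icc.1 hv).2)
    exact Multiset.coe_nodup.1 <| Multiset.toFinset_card_eq_card_iff_nodup (m := (w : Multiset ℕ)).1
      (le_antisymm (List.toFinset_card_le w) (by simpa [hcard] using this))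

def rank (s : List ℕ) (x : ℕ) : ℕ := s.countP (· ≤ x)

theorem rank_lt_rank {s : List ℕ} {x y : ℕ} (hy : y ∈ s) (hxy : x < y) :
    rank s x < rank s y := by
  obtain ⟨u, v, rfl⟩ := List.append_of_mem hy
  have hu : u.countP (· ≤ x) ≤ u.countP (· ≤ y) :=
    List.countP_mono_left fun z _ hz => by simp at hz ⊢; omega
  have hv : v.countP (· ≤ x) ≤ v.countP (· ≤ y) :=
    List.countP_mono_left fun z _ hz => by simp at hz ⊢; omega
  simp only [rank, List.countP_append, List.countP_cons, decide_eq_true_eq,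
    if_pos le_rfl, if_neg (not_le.2 hxy)]
  omega

theorem rank_lt_rank_iff {s : List ℕ} {x y : ℕ} (hx : x ∈ s) (hy : y ∈ s) :
    rank s x < rank s y ↔ x < y := by
  refine ⟨fun h => ?_, rank_lt_rank hy⟩
  by_contra! hyx
  rcases hyx.lt_or_eq with hyx | rfl
  · exact (rank_lt_rank hx hyx).not_gt h
  · exact lt_irrefl _ h

def standardize (s : List ℕ) : List ℕ := s.map (rank s)

theorem sameRelOrder_standardize (s : List ℕ) : SameRelOrder s (standardize s) := by
  refine ⟨by simp [standardize], fun p q hp hq => ?_⟩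
  rw [List.getD_eq_getElem _ _ hp, List.getD_eq_getElem _ _ hq,
    List.getD_eq_getElem _ _ (by simpa [standardize] using hp),
    List.getD_eq_getElem _ _ (by simpa [standardize] using hq)]
  simp only [standardize, List.getElem_map]
  exact (rank_lt_rank_iff (List.getElem_mem _) (List.getElem_mem _)).symm

theorem isPermWord_standardize {s : List ℕ} (hs : s.Nodup) :
    IsPermWord s.length (standardize s) := by
  refine ⟨by simp [standardize], hs.map_on fun x hx y hy hxy => ?_, ?_⟩
  · by_contra hne
    rcases Nat.lt_or_gt_of_ne hne with h | h
    · exact (rank_lt_rank hy h).ne hxy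
    · exact (rank_lt_rank hx h).ne' hxy
  · simp only [standardize, List.mem_map, forall_exists_index, and_imp, forall_apply_eq_imp_iff₂]
    exact fun x hx => ⟨List.countP_pos_iff.2 ⟨x, hx, by simp⟩, List.countP_le_length⟩

/-- A shorter pattern with as many descents survives inside some one-letter deletion, since
deletions never create descents; conversely a deletion keeping all descents standardizes to such a
pattern. -/
theorem isMinimal_iff_forall_card_descents_eraseIdx_lt {w : List ℕ} (hw : w.Nodup) :
    IsMinimal w ↔ ∀ p < w.length, #(descents (w.eraseIdx p)) < #(descents w) := by
  constructor
  · intro hmin p hp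
    by_contra hge
    set s := w.eraseIdx p
    have hsub : s.Sublist w := List.eraseIdx_sublist w p
    have hdes : #(descents (standardize s)) = #(descents w) := by
      rw [← descents_eq_of_sameRelOrder (sameRelOrder_standardize s)]
      exact le_antisymm (card_descents_eraseIdx_le w p) (not_lt.1 hge)
    exact hmin.2 s.length (standardize s) (isPermWord_standardize (hw.sublist hsub))
      (by simp [s, List.length_eraseIdx_of_lt hp]; omega) hdes ⟨s, hsub, sameRelOrder_standardize s⟩
  · intro hdel
    refine ⟨rfl, fun m σ hσ hm hd ⟨s, hsub, hrel⟩ => ?_⟩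
    obtain ⟨p, hp, hs⟩ := hsub.exists_sublist_eraseIdx (by rw [hrel.1, hσ.1]; exact hm)
    have := card_descents_le_of_sublist hs
    have := hdel p hp
    rw [descents_eq_of_sameRelOrder hrel, hd] at *
    omega

/-! ### Words cut into runs -/

def runStart (a : List ℕ) (c : ℕ) : ℕ := (a.take c).sum

theorem runStart_succ (a : List ℕ) (c : ℕ) : runStart a (c + 1) = runStart a c + a.getD c 0 := by
  simp only [runStart, List.take_add_one, List.sum_append, List.getD_eq_getElem?_getD]
  cases a[c]? <;> simp

theorem runStart_mono (a : List ℕ) {c c' : ℕ} (h : c ≤ c') : runStart a c ≤ runStart a c' := by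
  induction c', h using Nat.le_induction with
  | base => rfl
  | succ c' _ ih => rw [runStart_succ]; omega

theorem runStart_eq_sum {a : List ℕ} {c : ℕ} (hc : a.length ≤ c) : runStart a c = a.sum := by
  simp [runStart, List.take_of_length_le hc]

theorem runStart_le_sum (a : List ℕ) (c : ℕ) : runStart a c ≤ a.sum := by
  rw [← runStart_eq_sum le_rfl]
  rcases le_total c a.length with h | h
  · exact runStart_mono a h
  · rw [runStart_eq_sum h, runStart_eq_sum le_rfl]

theorem runStart_add_lt_length {a w : List ℕ} (hw : w.length = a.sum) ⦃c j : ℕ⦄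
    (hj : j < a.getD c 0) : runStart a c + j < w.length :=
  hw ▸ (runStart_succ a c ▸ runStart_le_sum a (c + 1)).trans_lt' (by omega)

theorem runStart_add_inj {a : List ℕ} {c c' j j' : ℕ} (hj : j < a.getD c 0)
    (hj' : j' < a.getD c' 0) (h : runStart a c + j = runStart a c' + j') : c = c' ∧ j = j' := by
  rcases lt_trichotomy c c' with hlt | rfl | hlt
  · have := runStart_mono a (Nat.succ_le_of_lt hlt)
    rw [runStart_succ] at this; omega
  · omega
  · have := runStart_mono a (Nat.succ_le_of_lt hlt)
    rw [runStart_succ] at this; omega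

theorem exists_eq_runStart_add {a : List ℕ} {p : ℕ} (hp : p < a.sum) :
    ∃ c < a.length, ∃ j < a.getD c 0, p = runStart a c + j := by
  induction a generalizing p with
  | nil => simp at hp
  | cons x a ih =>
    rw [List.sum_cons] at hp
    by_cases h : p < x
    · exact ⟨0, by simp, p, by simpa using h, by simp [runStart]⟩
    · obtain ⟨c, hc, j, hj, hp'⟩ := ih (p := p - x) (by omega)
      refine ⟨c + 1, by simpa using hc, j, by simpa using hj, ?_⟩
      simp only [runStart, List.take_succ_cons, List.sum_cons] at *
      omega

theorem getD_flatten {bs : List (List ℕ)} {c j : ℕ} (hc : c < bs.length)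
    (hj : j < bs[c].length) :
    bs.flatten.getD (runStart (bs.map List.length) c + j) 0 = bs[c][j] := by
  induction bs generalizing c with
  | nil => simp at hc
  | cons b bs ih =>
    rcases c with _ | c
    · simp only [List.getElem_cons_zero] at hj ⊢
      simp [runStart, List.getElem?_append_left hj, List.getElem?_eq_getElem hj]
    · simp only [List.getElem_cons_succ] at hj ⊢
      simp only [runStart, List.map_cons, List.take_succ_cons, List.sum_cons, List.flatten_cons]
      rw [List.getD_append_right _ _ _ _ (by omega), ← ih (by simpa using hc) hj]
      simp [runStart, Nat.add_assoc]

def RunsDecreasing (a w : List ℕ) : Prop :=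
  ∀ c < a.length, ∀ j, j + 1 < a.getD c 0 →
    w.getD (runStart a c + j + 1) 0 < w.getD (runStart a c + j) 0

def AscentsAtJunctions (a w : List ℕ) : Prop :=
  ∀ c, c + 1 < a.length → w.getD (runStart a (c + 1) - 1) 0 < w.getD (runStart a (c + 1)) 0

theorem forall_isChain_gt_iff_runsDecreasing (bs : List (List ℕ)) :
    (∀ b ∈ bs, b.IsChain (· > ·)) ↔ RunsDecreasing (bs.map List.length) bs.flatten := by
  simp only [RunsDecreasing, List.forall_mem_iff_getElem, List.isChain_iff_getElem,
    List.length_map]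
  refine forall₂_congr fun c hc => forall_congr' fun j => ?_
  rw [List.getD_eq_getElem _ _ (by simpa using hc), List.getElem_map]
  refine forall_congr' fun hj => ?_
  rw [Nat.add_assoc, getD_flatten hc hj, getD_flatten hc (by omega)]

theorem isChain_junction_iff_ascentsAtJunctions {bs : List (List ℕ)} (hbs : ∀ b ∈ bs, b ≠ []) :
    bs.IsChain (fun b b' => ∃ x ∈ b.getLast?, ∃ y ∈ b'.head?, x < y) ↔
      AscentsAtJunctions (bs.map List.length) bs.flatten := by
  simp only [AscentsAtJunctions, List.isChain_iff_getElem, List.length_map]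
  refine forall_congr' fun c => forall_congr' fun hc => ?_
  have hne : bs[c].length ≠ 0 := by simpa using hbs _ (List.getElem_mem (by omega))
  have hne' : bs[c + 1].length ≠ 0 := by simpa using hbs _ (List.getElem_mem hc)
  have hlast : runStart (bs.map List.length) (c + 1) - 1 =
      runStart (bs.map List.length) c + (bs[c].length - 1) := by
    rw [runStart_succ, List.getD_eq_getElem _ _ (by simp; omega), List.getElem_map]; omega
  rw [hlast, getD_flatten (by omega) (by omega), ← Nat.add_zero (runStart _ (c + 1)),
    getD_flatten hc (by omega), List.getLast?_eq_getElem?, List.head?_eq_getElem?,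
    List.getElem?_eq_getElem (by omega), List.getElem?_eq_getElem (by omega)]
  simp

theorem hasAscentSeq_iff {a w : List ℕ} (ha : ∀ x ∈ a, 0 < x) (hw : w.length = a.sum) :
    HasAscentSeq w a ↔ RunsDecreasing a w ∧ AscentsAtJunctions a w := by
  constructor
  · rintro ⟨bs, rfl, rfl, hruns, hjun⟩
    exact ⟨(forall_isChain_gt_iff_runsDecreasing bs).1 fun b hb => (hruns b hb).2,
      (isChain_junction_iff_ascentsAtJunctions fun b hb => (hruns b hb).1).1 hjun⟩
  · rintro ⟨hdec, hjun⟩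
    obtain ⟨bs, rfl, rfl⟩ : ∃ bs : List (List ℕ), bs.flatten = w ∧ bs.map List.length = a :=
      ⟨_, List.flatten_splitLengths _ _ hw.le, List.map_splitLengths_length _ _ hw.ge⟩
    have hne : ∀ b ∈ bs, b ≠ [] := by
      rintro b hb rfl
      simpa using ha 0 (List.mem_map_of_mem hb)
    exact ⟨bs, rfl, rfl,
      fun b hb => ⟨hne b hb, (forall_isChain_gt_iff_runsDecreasing bs).2 hdec b hb⟩,
      (isChain_junction_iff_ascentsAtJunctions hne).2 hjun⟩

theorem descentAt_runStart_add_iff {a w : List ℕ} (hw : w.length = a.sum)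
    (hdec : RunsDecreasing a w) (hjun : AscentsAtJunctions a w) ⦃c j : ℕ⦄ (hc : c < a.length)
    (hj : j < a.getD c 0) : DescentAt w (runStart a c + j) ↔ 0 < j := by
  have := runStart_add_lt_length hw hj
  rw [descentAt_iff]
  rcases j with _ | j
  · rcases c with _ | c
    · simp [runStart]
    · have := hjun c hc
      simp only [Nat.add_zero, lt_irrefl, iff_false, not_and, not_lt]
      omega
  · have := hdec c hc j hj
    simp only [Nat.add_sub_cancel, ← Nat.add_assoc]
    omega

def RunsInterlaced (a w : List ℕ) : Prop :=
  ∀ c, c + 1 < a.length →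
    w.getD (runStart a (c + 1) - 1) 0 < w.getD (runStart a (c + 1) + 1) 0 ∧
      w.getD (runStart a (c + 1) - 2) 0 < w.getD (runStart a (c + 1)) 0

theorem two_le_getD {a : List ℕ} (h2 : ∀ x ∈ a, 2 ≤ x) {c : ℕ} (hc : c < a.length) :
    2 ≤ a.getD c 0 :=
  List.getD_eq_getElem a 0 hc ▸ h2 _ (List.getElem_mem hc)

theorem runsInterlaced_of_forall_card_descents_eraseIdx_lt {a w : List ℕ}
    (h2 : ∀ x ∈ a, 2 ≤ x) (hw : w.Nodup) (hlen : w.length = a.sum) (hdec : RunsDecreasing a w)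
    (hjun : AscentsAtJunctions a w)
    (hdel : ∀ p < w.length, #(descents (w.eraseIdx p)) < #(descents w)) :
    RunsInterlaced a w := by
  intro c hc
  have hdes := descentAt_runStart_add_iff hlen hdec hjun
  have hac := two_le_getD h2 (c := c) (by omega)
  have hac' := two_le_getD h2 hc
  have hq : runStart a (c + 1) = runStart a c + (a.getD c 0 - 1) + 1 := by
    rw [runStart_succ]; omega
  set q := runStart a (c + 1)
  have hlast : DescentAt w (q - 1) := by
    rw [hq, Nat.add_sub_cancel, hdes (by omega) (by omega)]; omega
  have hfirst : ¬ DescentAt w q := by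
    simpa using (hdes hc (j := 0) (by omega)).not
  have hsecond : DescentAt w (q + 1) := (hdes hc (j := 1) (by omega)).2 one_pos
  have hq1 : q + 1 < w.length := runStart_add_lt_length hlen (c := c + 1) (j := 1) (by omega)
  constructor
  · refine (not_descentAt_eraseIdx_iff hw (by omega) hq1).1 ?_
    exact (card_descents_eraseIdx_lt_iff_of_xor (by omega) (.inr ⟨hsecond, hfirst⟩)).1
      (hdel q (by omega))
  · have := (not_descentAt_eraseIdx_iff hw (p := q - 1) (by omega) (by omega)).1 <|
      (card_descents_eraseIdx_lt_iff_of_xor (by omega)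
        (.inl ⟨hlast, by rwa [Nat.sub_add_cancel (by omega)]⟩)).1 (hdel (q - 1) (by omega))
    rwa [Nat.sub_add_cancel (by omega), Nat.sub_sub] at this

theorem card_descents_eraseIdx_lt_of_runsInterlaced {a w : List ℕ} (h2 : ∀ x ∈ a, 2 ≤ x)
    (hw : w.Nodup) (hlen : w.length = a.sum) (hdec : RunsDecreasing a w)
    (hjun : AscentsAtJunctions a w) (hint : RunsInterlaced a w) {p : ℕ} (hp : p < w.length) :
    #(descents (w.eraseIdx p)) < #(descents w) := by
  have hdes := descentAt_runStart_add_iff hlen hdec hjun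
  have hlt := runStart_add_lt_length hlen
  obtain ⟨c, hc, j, hj, rfl⟩ := exists_eq_runStart_add (hlen ▸ hp)
  have hac := two_le_getD h2 hc
  rcases Nat.eq_zero_or_pos j with rfl | hj0
  · have hB : ¬ DescentAt w (runStart a c + 0) := by simpa using (hdes hc hj).not
    have hC : DescentAt w (runStart a c + 0 + 1) := (hdes hc (j := 1) (by omega)).2 one_pos
    rw [card_descents_eraseIdx_lt_iff_of_xor hp (.inr ⟨hC, hB⟩)]
    rcases c with _ | c
    · simp [runStart, not_descentAt_zero]
    · have hpos : 0 < runStart a (c + 1) := by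
        have := two_le_getD h2 (c := c) (by omega)
        rw [runStart_succ]; omega
      rw [Nat.add_zero, not_descentAt_eraseIdx_iff hw hpos (hlt (j := 1) (by omega))]
      exact (hint c hc).1
  have hB := (hdes hc hj).2 hj0
  rcases (by omega : j + 1 < a.getD c 0 ∨ j + 1 = a.getD c 0) with hj1 | hj1
  · exact card_descents_eraseIdx_lt_of_descentAt hB ((hdes hc hj1).2 (by omega))
  have hnext : runStart a c + j + 1 = runStart a (c + 1) := by rw [runStart_succ]; omega
  rcases lt_or_ge (c + 1) a.length with hc1 | hc1
  · have hac' := two_le_getD h2 hc1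
    have hC : ¬ DescentAt w (runStart a c + j + 1) := by
      simpa [hnext] using (hdes hc1 (j := 0) (by omega)).not
    have hnext' : runStart a c + j + 1 < w.length := hnext ▸ hlt (j := 0) (by omega)
    rw [card_descents_eraseIdx_lt_iff_of_xor hp (.inl ⟨hB, hC⟩),
      not_descentAt_eraseIdx_iff hw (by omega) hnext']
    have := (hint c hc1).2
    rwa [← hnext, show runStart a c + j + 1 - 2 = runStart a c + j - 1 by omega] at this
  · have hend : runStart a c + j + 1 = w.length := by rw [hnext, runStart_eq_sum hc1, hlen]
    rw [card_descents_eraseIdx_lt_iff_of_xor hp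
      (.inl ⟨hB, not_descentAt_of_length_le hend.ge⟩), descentAt_eraseIdx_iff]
    omega

theorem isMinimal_iff_runsInterlaced {a w : List ℕ} (h2 : ∀ x ∈ a, 2 ≤ x) (hw : w.Nodup)
    (hlen : w.length = a.sum) (hdec : RunsDecreasing a w) (hjun : AscentsAtJunctions a w) :
    IsMinimal w ↔ RunsInterlaced a w :=
  (isMinimal_iff_forall_card_descents_eraseIdx_lt hw).trans
    ⟨runsInterlaced_of_forall_card_descents_eraseIdx_lt h2 hw hlen hdec hjun,
      fun hint _ => card_descents_eraseIdx_lt_of_runsInterlaced h2 hw hlen hdec hjun hint⟩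

theorem ascentsAtJunctions_of_runsInterlaced {a w : List ℕ} (h2 : ∀ x ∈ a, 2 ≤ x)
    (hdec : RunsDecreasing a w) (hint : RunsInterlaced a w) : AscentsAtJunctions a w :=
  fun c hc => (hint c hc).1.trans (by simpa using hdec (c + 1) hc 0 (two_le_getD h2 hc))

theorem mem_minimalPermsAsc_iff {a w : List ℕ} (h2 : ∀ x ∈ a, 2 ≤ x) :
    w ∈ minimalPermsAsc a.sum a ↔
      IsPermWord a.sum w ∧ RunsDecreasing a w ∧ RunsInterlaced a w := by
  have hpos : ∀ x ∈ a, 0 < x := fun x hx => by have := h2 x hx; omega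
  constructor
  · rintro ⟨hw, hmin, hasc⟩
    obtain ⟨hdec, hjun⟩ := (hasAscentSeq_iff hpos hw.1).1 hasc
    exact ⟨hw, hdec, (isMinimal_iff_runsInterlaced h2 hw.2.1 hw.1 hdec hjun).1 hmin⟩
  · rintro ⟨hw, hdec, hint⟩
    have hjun := ascentsAtJunctions_of_runsInterlaced h2 hdec hint
    exact ⟨hw, (isMinimal_iff_runsInterlaced h2 hw.2.1 hw.1 hdec hjun).2 hint,
      (hasAscentSeq_iff hpos hw.1).2 ⟨hdec, hjun⟩⟩

/-! ### Column reading of 2-regular tableaux -/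

instance (a : List ℕ) (r c : ℕ) : Decidable (twoRegCell a r c) :=
  inferInstanceAs (Decidable (_ ∧ _ ∧ _))

def colBottom (a : List ℕ) (c : ℕ) : ℕ := colTop a c + a.getD c 0 - 1

/-- The position of the cell `(r, c)` when the columns are read bottom to top, left to right. -/
def cellPos (a : List ℕ) (r c : ℕ) : ℕ := runStart a c + (colBottom a c - r)

def tableauOfWord (a w : List ℕ) (r c : ℕ) : ℕ :=
  if twoRegCell a r c then w.getD (cellPos a r c) 0 else 0

def columns (a : List ℕ) (T : ℕ → ℕ → ℕ) : List (List ℕ) :=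
  (List.range a.length).map fun c => (List.range (a.getD c 0)).map fun j => T (colBottom a c - j) c

def columnReading (a : List ℕ) (T : ℕ → ℕ → ℕ) : List ℕ := (columns a T).flatten

theorem twoRegCell_colBottom_sub {a : List ℕ} {c j : ℕ} (hc : c < a.length)
    (hj : j < a.getD c 0) : twoRegCell a (colBottom a c - j) c := by
  simp only [twoRegCell, colBottom]; omega

theorem cellPos_colBottom_sub {a : List ℕ} {c j : ℕ} (hj : j < a.getD c 0) :
    cellPos a (colBottom a c - j) c = runStart a c + j := by
  simp only [cellPos, colBottom]; omega

theorem cellPos_lt_sum {a : List ℕ} {r c : ℕ} (h : twoRegCell a r c) : cellPos a r c < a.sum := by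
  obtain ⟨hc, h1, h2⟩ := h
  have := runStart_succ a c ▸ runStart_le_sum a (c + 1)
  simp only [cellPos, colBottom]; omega

theorem cellPos_injOn {a : List ℕ} {r c r' c' : ℕ} (h : twoRegCell a r c)
    (h' : twoRegCell a r' c') (heq : cellPos a r c = cellPos a r' c') : r = r' ∧ c = c' := by
  obtain ⟨-, h1, h2⟩ := h
  obtain ⟨-, h1', h2'⟩ := h'
  obtain ⟨rfl, hj⟩ := runStart_add_inj (c := c) (c' := c') (j := colBottom a c - r)
    (j' := colBottom a c' - r') (by simp only [colBottom]; omega)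
    (by simp only [colBottom]; omega) heq
  simp only [colBottom] at hj
  omega

theorem exists_cellPos_eq {a : List ℕ} {p : ℕ} (hp : p < a.sum) :
    ∃ r c, twoRegCell a r c ∧ cellPos a r c = p := by
  obtain ⟨c, hc, j, hj, rfl⟩ := exists_eq_runStart_add hp
  exact ⟨_, c, twoRegCell_colBottom_sub hc hj, cellPos_colBottom_sub hj⟩

theorem map_length_columns (a : List ℕ) (T : ℕ → ℕ → ℕ) :
    (columns a T).map List.length = a :=
  List.ext_getElem (by simp [columns]) fun c _ hc => by
    simp [columns, List.getElem?_eq_getElem hc]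

theorem length_columnReading (a : List ℕ) (T : ℕ → ℕ → ℕ) :
    (columnReading a T).length = a.sum := by
  rw [columnReading, List.length_flatten, map_length_columns]

theorem getD_columnReading {a : List ℕ} (T : ℕ → ℕ → ℕ) {r c : ℕ} (h : twoRegCell a r c) :
    (columnReading a T).getD (cellPos a r c) 0 = T r c := by
  obtain ⟨hc, h1, h2⟩ := h
  have hj : colBottom a c - r < a.getD c 0 := by simp only [colBottom]; omega
  have hc' : c < (columns a T).length := by simpa [columns] using hc
  have key := getD_flatten hc' (j := colBottom a c - r) (by simpa [columns] using hj)
  rw [map_length_columns] at key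
  rw [columnReading, cellPos, key]
  simp only [columns, List.getElem_map, List.getElem_range]
  congr 1
  simp only [colBottom]; omega

theorem mem_columnReading_iff {a : List ℕ} {T : ℕ → ℕ → ℕ} {x : ℕ} :
    x ∈ columnReading a T ↔ ∃ r c, twoRegCell a r c ∧ T r c = x := by
  rw [List.mem_iff_getElem]
  constructor
  · rintro ⟨p, hp, rfl⟩
    obtain ⟨r, c, h, rfl⟩ := exists_cellPos_eq (length_columnReading a T ▸ hp)
    exact ⟨r, c, h, by rw [← getD_columnReading T h, List.getD_eq_getElem _ _ hp]⟩
  · rintro ⟨r, c, h, rfl⟩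
    have hp := (length_columnReading a T).symm ▸ cellPos_lt_sum h
    exact ⟨_, hp, by rw [← List.getD_eq_getElem _ 0 hp, getD_columnReading T h]⟩

theorem isPermWord_columnReading {a : List ℕ} {T : ℕ → ℕ → ℕ} (hT : Is2RegularTableau a T) :
    IsPermWord a.sum (columnReading a T) := by
  obtain ⟨-, hbd, -, hsurj, -, -⟩ := hT
  refine (isPermWord_iff_forall_mem (length_columnReading a T) ?_).2 fun v h1 h2 => ?_
  · intro x hx
    obtain ⟨r, c, h, rfl⟩ := mem_columnReading_iff.1 hx
    exact hbd r c h
  · obtain ⟨r, c, h, rfl⟩ := hsurj v h1 h2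
    exact mem_columnReading_iff.2 ⟨r, c, h, rfl⟩

theorem tableauOfWord_columnReading {a : List ℕ} {T : ℕ → ℕ → ℕ}
    (hT : ∀ r c, ¬ twoRegCell a r c → T r c = 0) : tableauOfWord a (columnReading a T) = T := by
  funext r c
  by_cases h : twoRegCell a r c
  · rw [tableauOfWord, if_pos h, getD_columnReading T h]
  · rw [tableauOfWord, if_neg h, hT r c h]

theorem columnReading_tableauOfWord {a w : List ℕ} (hw : w.length = a.sum) :
    columnReading a (tableauOfWord a w) = w := by
  refine List.ext_getElem (by rw [length_columnReading, hw]) fun p hp hp' => ?_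
  obtain ⟨r, c, h, rfl⟩ := exists_cellPos_eq (length_columnReading a _ ▸ hp)
  rw [← List.getD_eq_getElem _ 0 hp, ← List.getD_eq_getElem _ 0 hp', getD_columnReading _ h,
    tableauOfWord, if_pos h]

theorem colTop_succ_add {a : List ℕ} (h2 : ∀ x ∈ a, 2 ≤ x) {c : ℕ} (hc : c + 1 < a.length) :
    colTop a (c + 1) + a.getD (c + 1) 0 = colTop a c + 2 := by
  have hbound := List.card_nsmul_le_sum (a.drop (c + 2)) 2 fun x hx =>
    h2 x (List.mem_of_mem_drop hx)
  rw [smul_eq_mul, List.length_drop] at hbound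
  simp only [colTop, List.drop_eq_getElem_cons hc, List.sum_cons, List.getD_eq_getElem _ _ hc,
    Nat.add_assoc, Nat.reduceAdd]
  have := h2 _ (List.getElem_mem hc)
  omega

theorem tableauOfWord_of_twoRegCell {a w : List ℕ} {r c : ℕ} (h : twoRegCell a r c) :
    tableauOfWord a w r c = w.getD (cellPos a r c) 0 :=
  if_pos h

theorem colsIncreasing_tableauOfWord_iff {a w : List ℕ} :
    (∀ r c, twoRegCell a r c → twoRegCell a (r + 1) c →
      tableauOfWord a w r c < tableauOfWord a w (r + 1) c) ↔ RunsDecreasing a w := by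
  constructor
  · intro h c hc j hj
    have hcell := twoRegCell_colBottom_sub hc (j := j + 1) hj
    have hcell' := twoRegCell_colBottom_sub hc (j := j) (by omega)
    have hr : colBottom a c - (j + 1) + 1 = colBottom a c - j := by
      simp only [colBottom] at hcell ⊢; omega
    have := h _ c hcell (hr ▸ hcell')
    rwa [tableauOfWord_of_twoRegCell hcell, tableauOfWord_of_twoRegCell (hr ▸ hcell'), hr,
      cellPos_colBottom_sub hj, cellPos_colBottom_sub (by omega), ← Nat.add_assoc] at this
  · intro h r c hr hr'
    obtain ⟨hc, h1, h2⟩ := hr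
    obtain ⟨-, h1', h2'⟩ := hr'
    have := h c hc (colBottom a c - (r + 1)) (by simp only [colBottom]; omega)
    have hpos : cellPos a r c = runStart a c + (colBottom a c - (r + 1)) + 1 := by
      simp only [cellPos, colBottom]; omega
    rwa [tableauOfWord_of_twoRegCell ⟨hc, h1, h2⟩, tableauOfWord_of_twoRegCell ⟨hc, h1', h2'⟩,
      hpos, cellPos]

theorem twoRegCell_and_twoRegCell_succ_iff {a : List ℕ} (h2 : ∀ x ∈ a, 2 ≤ x) {r c : ℕ}
    (hc : c + 1 < a.length) :
    twoRegCell a r c ∧ twoRegCell a r (c + 1) ↔ r = colTop a c ∨ r = colTop a c + 1 := by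
  have := colTop_succ_add h2 hc
  have := two_le_getD h2 (c := c) (by omega)
  have := two_le_getD h2 hc
  simp only [twoRegCell]
  omega

theorem cellPos_shared_rows {a : List ℕ} (h2 : ∀ x ∈ a, 2 ≤ x) {c : ℕ} (hc : c + 1 < a.length) :
    cellPos a (colTop a c) c = runStart a (c + 1) - 1 ∧
      cellPos a (colTop a c) (c + 1) = runStart a (c + 1) + 1 ∧
      cellPos a (colTop a c + 1) c = runStart a (c + 1) - 2 ∧
      cellPos a (colTop a c + 1) (c + 1) = runStart a (c + 1) := by
  have := colTop_succ_add h2 hc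
  have := two_le_getD h2 (c := c) (by omega)
  have := two_le_getD h2 hc
  simp only [cellPos, colBottom, runStart_succ]
  omega

theorem rowsIncreasing_tableauOfWord_iff {a w : List ℕ} (h2 : ∀ x ∈ a, 2 ≤ x) :
    (∀ r c, twoRegCell a r c → twoRegCell a r (c + 1) →
      tableauOfWord a w r c < tableauOfWord a w r (c + 1)) ↔ RunsInterlaced a w := by
  constructor
  · intro h c hc
    obtain ⟨p1, p2, p3, p4⟩ := cellPos_shared_rows h2 hc
    obtain ⟨t1, t2⟩ := (twoRegCell_and_twoRegCell_succ_iff h2 hc).2 (.inl rfl)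
    obtain ⟨b1, b2⟩ := (twoRegCell_and_twoRegCell_succ_iff h2 hc).2 (.inr rfl)
    have htop := h _ c t1 t2
    have hbot := h _ c b1 b2
    rw [tableauOfWord_of_twoRegCell t1, tableauOfWord_of_twoRegCell t2, p1, p2] at htop
    rw [tableauOfWord_of_twoRegCell b1, tableauOfWord_of_twoRegCell b2, p3, p4] at hbot
    exact ⟨htop, hbot⟩
  · intro h r c hr hr'
    have hc : c + 1 < a.length := hr'.1
    obtain ⟨p1, p2, p3, p4⟩ := cellPos_shared_rows h2 hc
    rw [tableauOfWord_of_twoRegCell hr, tableauOfWord_of_twoRegCell hr']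
    rcases (twoRegCell_and_twoRegCell_succ_iff h2 hc).1 ⟨hr, hr'⟩ with rfl | rfl
    · rw [p1, p2]; exact (h c hc).1
    · rw [p3, p4]; exact (h c hc).2

theorem is2RegularTableau_tableauOfWord_iff {a w : List ℕ} (h2 : ∀ x ∈ a, 2 ≤ x)
    (hw : IsPermWord a.sum w) :
    Is2RegularTableau a (tableauOfWord a w) ↔ RunsDecreasing a w ∧ RunsInterlaced a w := by
  have hlt : ∀ {r c}, twoRegCell a r c → cellPos a r c < w.length :=
    fun h => hw.1 ▸ cellPos_lt_sum h
  have hbd : ∀ r c, twoRegCell a r c →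
      1 ≤ tableauOfWord a w r c ∧ tableauOfWord a w r c ≤ a.sum := fun r c h => by
    rw [tableauOfWord_of_twoRegCell h, List.getD_eq_getElem _ _ (hlt h)]
    exact hw.2.2 _ (List.getElem_mem _)
  have hinj : ∀ r c r' c', twoRegCell a r c → twoRegCell a r' c' →
      tableauOfWord a w r c = tableauOfWord a w r' c' → r = r' ∧ c = c' := by
    intro r c r' c' h h' heq
    rw [tableauOfWord_of_twoRegCell h, tableauOfWord_of_twoRegCell h'] at heq
    exact cellPos_injOn h h'
      (by_contra fun hne => getD_ne_getD_of_nodup hw.2.1 (hlt h) (hlt h') hne heq)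
  have hsurj : ∀ v, 1 ≤ v → v ≤ a.sum → ∃ r c, twoRegCell a r c ∧ tableauOfWord a w r c = v := by
    intro v hv1 hv2
    have hv := (isPermWord_iff_forall_mem hw.1 hw.2.2).1 hw v hv1 hv2
    obtain ⟨p, hp, rfl⟩ := List.mem_iff_getElem.1 hv
    obtain ⟨r, c, h, rfl⟩ := exists_cellPos_eq (hw.1 ▸ hp)
    exact ⟨r, c, h, by rw [tableauOfWord_of_twoRegCell h, List.getD_eq_getElem _ _ hp]⟩
  rw [← colsIncreasing_tableauOfWord_iff, ← rowsIncreasing_tableauOfWord_iff h2]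
  exact ⟨fun hT => ⟨hT.2.2.2.2.2, hT.2.2.2.2.1⟩,
    fun ⟨hcol, hrow⟩ => ⟨fun r c h => if_neg h, hbd, hinj, hsurj, hrow, hcol⟩⟩

theorem is2RegularTableau_tableauOfWord {a w : List ℕ} (h2 : ∀ x ∈ a, 2 ≤ x)
    (hw : w ∈ minimalPermsAsc a.sum a) : Is2RegularTableau a (tableauOfWord a w) :=
  let ⟨hperm, hruns⟩ := (mem_minimalPermsAsc_iff h2).1 hw
  (is2RegularTableau_tableauOfWord_iff h2 hperm).2 hruns

theorem columnReading_mem_minimalPermsAsc {a : List ℕ} {T : ℕ → ℕ → ℕ} (h2 : ∀ x ∈ a, 2 ≤ x)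
    (hT : Is2RegularTableau a T) : columnReading a T ∈ minimalPermsAsc a.sum a := by
  have hperm := isPermWord_columnReading hT
  refine (mem_minimalPermsAsc_iff h2).2 ⟨hperm, (is2RegularTableau_tableauOfWord_iff h2 hperm).1 ?_⟩
  rwa [tableauOfWord_columnReading hT.1]

def minimalPermsAscEquiv {a : List ℕ} (h2 : ∀ x ∈ a, 2 ≤ x) :
    minimalPermsAsc a.sum a ≃ {T : ℕ → ℕ → ℕ // Is2RegularTableau a T} where
  toFun w := ⟨tableauOfWord a w, is2RegularTableau_tableauOfWord h2 w.2⟩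
  invFun T := ⟨columnReading a T, columnReading_mem_minimalPermsAsc h2 T.2⟩
  left_inv w := Subtype.ext (columnReading_tableauOfWord w.2.1.1)
  right_inv T := Subtype.ext (tableauOfWord_columnReading T.2.1)

end MinimalPermTableau

open MinimalPermTableau in
/-- for `a = (a₁,…,a_k)` with each `aᵢ ≥ 2` and `a₁+⋯+a_k = n`, the set
`𝓕_{a₁,…,a_k}(n)` of minimal permutations of length `n` with ascent sequence `a` is in
bijection with the set `𝓟_{a₁,…,a_k}(n)` of 2-regular skew tableaux with column lengths
`a₁,…,a_k`; in particular the two sets have the same cardinality. -/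
theorem minimalPerms_equiv_twoRegularTableaux (n : ℕ) (a : List ℕ)
    (h2 : ∀ x ∈ a, 2 ≤ x) (hsum : a.sum = n) :
    Nonempty ((minimalPermsAsc n a) ≃ {T : ℕ → ℕ → ℕ // Is2RegularTableau a T}) ∧
      (minimalPermsAsc n a).ncard = Nat.card {T : ℕ → ℕ → ℕ // Is2RegularTableau a T} := by
  subst hsum
  exact ⟨⟨minimalPermsAscEquiv h2⟩,
    (Nat.card_coe_set_eq _).symm.trans (Nat.card_congr (minimalPermsAscEquiv h2))⟩
end

section
/- For n ≥ 3, the number of minimal permutations of length n with n − 2 descents is f_{n−2}(n) = 2^n − n(n−1) − 2. -/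
/-!
A permutation of `[n]` with `n - 2` descents is made of two decreasing runs, so it is
`splitWord n S` for the set `S` of entries of its first run. A shorter pattern with `n - 2`
descents can only be a decreasing word of length `n - 1`, and `splitWord n S` contains one exactly
when, after deleting a single value `x`, the rest of `S` lies above the rest of its complement.
Splitting according to whether `n + 1 ∈ S` shows that the number `b n` of such sets `S ⊆ [n]`
satisfies `b (n + 1) = b n + 2 * n`, so `b n = n ^ 2 - n + 2` and `f_{n-2}(n) = 2 ^ n - b n`.
-/

open Finset

section Descents

lemma mem_descents {w : List ℕ} {i : ℕ} : i ∈ descents w ↔ DescentAt w i := by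
  simp only [descents, mem_filter, mem_range, and_iff_right_iff_imp]
  exact fun h => h.2.1

lemma descentAt_succ_iff {w : List ℕ} {i : ℕ} (hi : i + 1 < w.length) :
    DescentAt w (i + 1) ↔ w[i + 1] < w[i] := by
  rw [DescentAt, List.getD_eq_getElem _ _ hi, Nat.add_sub_cancel,
    List.getD_eq_getElem _ _ (by omega)]
  exact ⟨fun h => h.2.2, fun h => ⟨by omega, hi, h⟩⟩

lemma descents_subset_Icc (w : List ℕ) : descents w ⊆ Icc 1 (w.length - 1) := by
  intro i hi
  obtain ⟨h1, h2, -⟩ := mem_descents.1 hi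
  exact mem_Icc.2 ⟨h1, by omega⟩

lemma card_descents_le (w : List ℕ) : #(descents w) ≤ w.length - 1 := by
  simpa using card_le_card (descents_subset_Icc w)

lemma sortedGT_iff_forall_getElem {l : List ℕ} :
    l.SortedGT ↔ ∀ i (hi : i + 1 < l.length), l[i + 1] < l[i] :=
  List.sortedGT_iff_isChain.trans List.isChain_iff_getElem

lemma card_descents_eq_iff_sortedGT {w : List ℕ} :
    #(descents w) = w.length - 1 ↔ w.SortedGT := by
  have hcard : #(Icc 1 (w.length - 1)) = w.length - 1 := by simp
  rw [sortedGT_iff_forall_getElem]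
  refine ⟨fun h i hi => ?_, fun h => ?_⟩
  · have : i + 1 ∈ descents w := by
      rw [eq_of_subset_of_card_le (descents_subset_Icc w) (hcard.trans h.symm).le]
      exact mem_Icc.2 ⟨by omega, by omega⟩
    exact (descentAt_succ_iff hi).1 (mem_descents.1 this)
  · rw [← hcard]
    congr 1
    refine (descents_subset_Icc w).antisymm fun i hi => ?_
    obtain ⟨j, rfl⟩ : ∃ j, i = j + 1 := ⟨i - 1, by simp at hi; omega⟩
    have hj : j + 1 < w.length := by simp at hi; omega
    exact mem_descents.2 ((descentAt_succ_iff hj).2 (h j hj))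

lemma exists_sortedGT_append {w : List ℕ} (hd : #(descents w) + 2 = w.length) :
    ∃ u v, w = u ++ v ∧ u.SortedGT ∧ v.SortedGT := by
  have hsub := descents_subset_Icc w
  obtain ⟨a, ha⟩ : ∃ a, Icc 1 (w.length - 1) \ descents w = {a} := by
    rw [← card_eq_one, card_sdiff_of_subset hsub, Nat.card_Icc]; omega
  have hdesc : ∀ i (hi : i + 1 < w.length), i + 1 ≠ a → w[i + 1] < w[i] := fun i hi hia =>
    (descentAt_succ_iff hi).1 <| mem_descents.1 <| by
      by_contra h
      have : i + 1 ∈ Icc 1 (w.length - 1) \ descents w :=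
        mem_sdiff.2 ⟨mem_Icc.2 ⟨by omega, by omega⟩, h⟩
      simp [ha, hia] at this
  have ha1 : 1 ≤ a := by
    have : a ∈ Icc 1 (w.length - 1) \ descents w := by simp [ha]
    simp at this; omega
  refine ⟨w.take a, w.drop a, (List.take_append_drop a w).symm, ?_, ?_⟩
  · rw [sortedGT_iff_forall_getElem]
    intro i hi
    simp only [List.length_take, List.getElem_take] at hi ⊢
    exact hdesc i (by omega) (by omega)
  · rw [sortedGT_iff_forall_getElem]
    intro i hi
    simp only [List.length_drop, List.getElem_drop] at hi ⊢
    exact hdesc (a + i) (by omega) (by omega)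

lemma descents_append {u v : List ℕ} (hu : u.SortedGT) (hv : v.SortedGT)
    (hasc : ∃ x ∈ u, ∃ y ∈ v, x < y) :
    descents (u ++ v) = (Icc 1 (u.length + v.length - 1)).erase u.length := by
  obtain ⟨x, hx, y, hy, hxy⟩ := hasc
  obtain ⟨p, hp, rfl⟩ := List.getElem_of_mem hx
  obtain ⟨q, hq, rfl⟩ := List.getElem_of_mem hy
  have hlast : u[u.length - 1] < v[0] :=
    calc u[u.length - 1] ≤ u[p] := (hu.getElem_le_getElem_iff).2 (by omega)
      _ < v[q] := hxy
      _ ≤ v[0] := (hv.getElem_le_getElem_iff).2 (by omega)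
  ext i
  simp only [mem_erase, mem_Icc]
  constructor
  · intro hi
    obtain ⟨h1, h2, hlt⟩ := mem_descents.1 hi
    refine ⟨fun h => ?_, h1, by simp at h2; omega⟩
    subst h
    rw [List.getD_append_right _ _ _ _ le_rfl, List.getD_append _ _ _ _ (by omega), Nat.sub_self,
      List.getD_eq_getElem _ _ (by omega), List.getD_eq_getElem _ _ (by omega)] at hlt
    exact absurd hlast (not_lt.2 hlt.le)
  · rintro ⟨hne, h1, h2⟩
    obtain ⟨j, rfl⟩ : ∃ j, i = j + 1 := ⟨i - 1, by omega⟩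
    have hj : j + 1 < (u ++ v).length := by simp; omega
    refine mem_descents.2 ((descentAt_succ_iff hj).2 ?_)
    rcases lt_or_gt_of_ne hne with h | h
    · rw [List.getElem_append_left (by omega), List.getElem_append_left (by omega)]
      exact (hu.getElem_lt_getElem_iff).2 (by omega)
    · rw [List.getElem_append_right (by omega), List.getElem_append_right (by omega)]
      exact (hv.getElem_lt_getElem_iff).2 (by omega)

end Descents

section SplitWords

def LiesAbove (A B : Finset ℕ) : Prop :=
  ∀ a ∈ A, ∀ b ∈ B, b < a

instance (A B : Finset ℕ) : Decidable (LiesAbove A B) := by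
  unfold LiesAbove; infer_instance

lemma LiesAbove.mono {A A' B B' : Finset ℕ} (h : LiesAbove A B) (hA : A' ⊆ A) (hB : B' ⊆ B) :
    LiesAbove A' B' :=
  fun a ha b hb => h a (hA ha) b (hB hb)

lemma sort_ge_sublist {A B : Finset ℕ} (h : A ⊆ B) :
    (A.sort (· ≥ ·)).Sublist (B.sort (· ≥ ·)) :=
  List.sublist_of_subperm_of_sortedGE
    ((sort_nodup _ _).subperm fun x hx => by simpa using h (by simpa using hx))
    (sortedGT_sort A).sortedGE (sortedGT_sort B).sortedGE

lemma sortedGT_sort_append_sort_iff {A B : Finset ℕ} :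
    (A.sort (· ≥ ·) ++ B.sort (· ≥ ·)).SortedGT ↔ LiesAbove A B := by
  simp [List.sortedGT_iff_pairwise, List.pairwise_append, (sortedGT_sort _).pairwise, LiesAbove]

lemma sort_toFinset_of_sortedGT {l : List ℕ} (h : l.SortedGT) : l.toFinset.sort (· ≥ ·) = l :=
  (List.toFinset_sort _ h.nodup).2 h.sortedGE.pairwise

/-- A decreasing sublist of length `#A + #B - 1` omits a single letter `x` and must take the rest
of `A` before the rest of `B`. -/
lemma exists_liesAbove_erase_of_sublist {A B : Finset ℕ} (hAB : Disjoint A B) {s : List ℕ}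
    (hs : s.Sublist (A.sort (· ≥ ·) ++ B.sort (· ≥ ·))) (hlen : s.length + 1 = #A + #B)
    (hsort : s.SortedGT) : ∃ x ∈ A ∪ B, LiesAbove (A.erase x) (B.erase x) := by
  obtain ⟨s₁, s₂, rfl, h₁, h₂⟩ := List.sublist_append_iff.1 hs
  have hsub : (s₁ ++ s₂).toFinset ⊆ A ∪ B := fun y hy => by
    rcases List.mem_append.1 (List.mem_toFinset.1 hy) with hy | hy
    · exact mem_union_left _ ((mem_sort _).1 (h₁.subset hy))
    · exact mem_union_right _ ((mem_sort _).1 (h₂.subset hy))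
  obtain ⟨x, hx⟩ : ∃ x, (A ∪ B) \ (s₁ ++ s₂).toFinset = {x} := by
    rw [← card_eq_one, card_sdiff_of_subset hsub, card_union_of_disjoint hAB,
      List.toFinset_card_of_nodup hsort.nodup]
    omega
  have hmem : ∀ y ∈ A ∪ B, y ≠ x → y ∈ s₁ ++ s₂ := fun y hy hyx => by
    by_contra h
    have : y ∈ (A ∪ B) \ (s₁ ++ s₂).toFinset := mem_sdiff.2 ⟨hy, by simpa using h⟩
    exact hyx (mem_singleton.1 (hx ▸ this))
  refine ⟨x, (mem_sdiff.1 (hx ▸ mem_singleton_self x)).1, fun a ha b hb => ?_⟩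
  obtain ⟨hax, haA⟩ := mem_erase.1 ha
  obtain ⟨hbx, hbB⟩ := mem_erase.1 hb
  have ha₁ : a ∈ s₁ := (List.mem_append.1 (hmem a (mem_union_left _ haA) hax)).resolve_right
    fun h => disjoint_left.1 hAB haA ((mem_sort _).1 (h₂.subset h))
  have hb₂ : b ∈ s₂ := (List.mem_append.1 (hmem b (mem_union_right _ hbB) hbx)).resolve_left
    fun h => disjoint_left.1 hAB ((mem_sort _).1 (h₁.subset h)) hbB
  exact (List.pairwise_append.1 hsort.pairwise).2.2 a ha₁ b hb₂

lemma exists_sortedGT_sublist_iff {A B : Finset ℕ} (hAB : Disjoint A B) :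
    (∃ s : List ℕ, s.Sublist (A.sort (· ≥ ·) ++ B.sort (· ≥ ·)) ∧
        s.length + 1 = #A + #B ∧ s.SortedGT) ↔
      ∃ x ∈ A ∪ B, LiesAbove (A.erase x) (B.erase x) := by
  refine ⟨fun ⟨_, h₁, h₂, h₃⟩ => exists_liesAbove_erase_of_sublist hAB h₁ h₂ h₃, ?_⟩
  rintro ⟨x, hx, hab⟩
  refine ⟨_, (sort_ge_sublist (erase_subset x A)).append (sort_ge_sublist (erase_subset x B)),
    ?_, sortedGT_sort_append_sort_iff.2 hab⟩
  simp only [List.length_append, length_sort]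
  rcases mem_union.1 hx with h | h
  · rw [card_erase_of_mem h, erase_eq_of_notMem (disjoint_left.1 hAB h)]
    have := card_pos.2 ⟨x, h⟩
    omega
  · rw [card_erase_of_mem h, erase_eq_of_notMem (disjoint_right.1 hAB h)]
    have := card_pos.2 ⟨x, h⟩
    omega

lemma sameRelOrder_iff_sortedGT {s σ : List ℕ} (hσ : σ.SortedGT) (hl : s.length = σ.length) :
    SameRelOrder s σ ↔ s.SortedGT := by
  constructor
  · rintro ⟨-, h⟩
    refine List.sortedGT_iff_getElem_gt_getElem_of_lt.2 fun i j hi hj hji => ?_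
    have := (h i j hi hj).2
    rw [List.getD_eq_getElem _ _ hi, List.getD_eq_getElem _ _ hj,
      List.getD_eq_getElem _ _ (hl ▸ hi), List.getD_eq_getElem _ _ (hl ▸ hj)] at this
    exact this (hσ.getElem_lt_getElem_iff.2 hji)
  · intro hs
    refine ⟨hl, fun p q hp hq => ?_⟩
    rw [List.getD_eq_getElem _ _ hp, List.getD_eq_getElem _ _ hq,
      List.getD_eq_getElem _ _ (hl ▸ hp), List.getD_eq_getElem _ _ (hl ▸ hq),
      hs.getElem_lt_getElem_iff, hσ.getElem_lt_getElem_iff]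

lemma isPermWord_sort_Icc (m : ℕ) : IsPermWord m ((Icc 1 m).sort (· ≥ ·)) :=
  ⟨by simp, sort_nodup _ _, fun x hx => by simpa using hx⟩

lemma IsPermWord.toFinset_eq {n : ℕ} {w : List ℕ} (hw : IsPermWord n w) :
    w.toFinset = Icc 1 n :=
  eq_of_subset_of_card_le (fun x hx => by simpa using hw.2.2 x (List.mem_toFinset.1 hx))
    (by simp [List.toFinset_card_of_nodup hw.2.1, hw.1])

/-- The only shorter patterns with `n - 2` descents are the decreasing words of length `n - 1`. -/
lemma minimalPerm_iff {n : ℕ} (hn : 3 ≤ n) {w : List ℕ} (hw : IsPermWord n w) :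
    MinimalPerm (n - 2) w ↔
      #(descents w) = n - 2 ∧
        ¬∃ s : List ℕ, s.Sublist w ∧ s.length + 1 = n ∧ s.SortedGT := by
  have hwlen := hw.1
  refine and_congr_right fun _ =>
    ⟨fun hmin ⟨s, hs, hlen, hsort⟩ => ?_, fun hno m σ hσ hm hd => ?_⟩
  · have hσ := isPermWord_sort_Icc (n - 1)
    refine hmin (n - 1) _ hσ (by omega) ?_ ⟨s, hs, ?_⟩
    · rw [card_descents_eq_iff_sortedGT.2 (sortedGT_sort _), hσ.1]; omega
    · rw [sameRelOrder_iff_sortedGT (sortedGT_sort _) (by rw [hσ.1]; omega)]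
      exact hsort
  · rintro ⟨s, hs, hrel⟩
    have := card_descents_le σ
    have hσlen := hσ.1
    have hσsort : σ.SortedGT := card_descents_eq_iff_sortedGT.1 (by omega)
    exact hno ⟨s, hs, by rw [hrel.1, hσlen]; omega,
      (sameRelOrder_iff_sortedGT hσsort hrel.1).1 hrel⟩

def splitWord (n : ℕ) (S : Finset ℕ) : List ℕ :=
  S.sort (· ≥ ·) ++ (Icc 1 n \ S).sort (· ≥ ·)

/-- By `minimalPerm_splitWord_iff`, this says that `splitWord n S` contains a decreasing pattern of
length `n - 1`. -/
def IsNearTop (n : ℕ) (S : Finset ℕ) : Prop :=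
  ∃ x ∈ Icc 1 n, LiesAbove (S.erase x) ((Icc 1 n \ S).erase x)

instance (n : ℕ) : DecidablePred (IsNearTop n) := by
  unfold IsNearTop; infer_instance

variable {n : ℕ} {S : Finset ℕ}

lemma card_add_card_Icc_sdiff (hS : S ⊆ Icc 1 n) : #S + #(Icc 1 n \ S) = n := by
  rw [add_comm, card_sdiff_add_card_eq_card hS, Nat.card_Icc, Nat.add_sub_cancel]

lemma isPermWord_splitWord (hS : S ⊆ Icc 1 n) : IsPermWord n (splitWord n S) := by
  refine ⟨?_, ?_, fun x hx => ?_⟩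
  · simp [splitWord, card_add_card_Icc_sdiff hS]
  · exact (sort_nodup _ _).append (sort_nodup _ _) fun a ha hb => by simp_all
  · simp only [splitWord, List.mem_append, mem_sort, mem_sdiff] at hx
    simpa using hx.elim (@hS x) And.left

lemma exists_eq_splitWord {w : List ℕ} (hw : IsPermWord n w) (hd : #(descents w) + 2 = n) :
    ∃ S ⊆ Icc 1 n, w = splitWord n S := by
  obtain ⟨u, v, rfl, hu, hv⟩ := exists_sortedGT_append (hw.1 ▸ hd)
  have hdisj : Disjoint u.toFinset v.toFinset := by
    simpa using List.disjoint_of_nodup_append hw.2.1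
  refine ⟨u.toFinset, hw.toFinset_eq ▸ by simp, ?_⟩
  rw [splitWord, ← hw.toFinset_eq, List.toFinset_append, union_sdiff_left,
    sdiff_eq_self_of_disjoint hdisj.symm, sort_toFinset_of_sortedGT hu,
    sort_toFinset_of_sortedGT hv]

lemma exists_lt_of_not_isNearTop (hn : 1 ≤ n) (h : ¬IsNearTop n S) :
    ∃ a ∈ S, ∃ b ∈ Icc 1 n \ S, a < b := by
  have : ¬LiesAbove (S.erase 1) ((Icc 1 n \ S).erase 1) := fun hl => h ⟨1, by simp [hn], hl⟩
  simp only [LiesAbove, not_forall, not_lt, exists_prop] at this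
  obtain ⟨a, ha, b, hb, hab⟩ := this
  have hb' := (mem_erase.1 hb).2
  exact ⟨a, (mem_erase.1 ha).2, b, hb', lt_of_le_of_ne hab fun h => (mem_sdiff.1 hb').2
    (h ▸ (mem_erase.1 ha).2)⟩

lemma card_mem_Icc_of_exists_lt (hS : S ⊆ Icc 1 n)
    (hasc : ∃ a ∈ S, ∃ b ∈ Icc 1 n \ S, a < b) :
    #S ∈ Icc 1 (n - 1) := by
  obtain ⟨a, ha, b, hb, -⟩ := hasc
  have : #S < #(Icc 1 n) :=
    card_lt_card ⟨hS, fun h => (mem_sdiff.1 hb).2 (h (mem_sdiff.1 hb).1)⟩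
  simp only [Nat.card_Icc] at this
  exact mem_Icc.2 ⟨card_pos.2 ⟨a, ha⟩, by omega⟩

lemma descents_splitWord (hS : S ⊆ Icc 1 n) (hasc : ∃ a ∈ S, ∃ b ∈ Icc 1 n \ S, a < b) :
    descents (splitWord n S) = (Icc 1 (n - 1)).erase #S := by
  rw [splitWord, descents_append (sortedGT_sort _) (sortedGT_sort _) (by simpa using hasc)]
  simp [card_add_card_Icc_sdiff hS]

theorem minimalPerm_splitWord_iff (hn : 3 ≤ n) (hS : S ⊆ Icc 1 n) :
    MinimalPerm (n - 2) (splitWord n S) ↔ ¬IsNearTop n S := by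
  have hsplit := exists_sortedGT_sublist_iff (A := S) (disjoint_sdiff (s := S) (t := Icc 1 n))
  rw [card_add_card_Icc_sdiff hS, union_sdiff_of_subset hS] at hsplit
  rw [minimalPerm_iff hn (isPermWord_splitWord hS), splitWord, hsplit]
  refine ⟨And.right, fun h => ⟨?_, h⟩⟩
  have hasc := exists_lt_of_not_isNearTop (by omega) h
  have := card_mem_Icc_of_exists_lt hS hasc
  rw [← splitWord, descents_splitWord hS hasc, card_erase_of_mem this, Nat.card_Icc]
  omega

lemma splitWord_injOn (hn : 1 ≤ n) :
    Set.InjOn (splitWord n) ↑{S ∈ (Icc 1 n).powerset | ¬IsNearTop n S} := by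
  intro S hS S' hS' heq
  simp only [coe_filter, mem_powerset, Set.mem_ofPred_eq] at hS hS'
  have hasc := exists_lt_of_not_isNearTop hn hS.2
  have hasc' := exists_lt_of_not_isNearTop hn hS'.2
  have hc : #S = #S' := by
    by_contra hne
    have h := congrArg descents heq
    rw [descents_splitWord hS.1 hasc, descents_splitWord hS'.1 hasc'] at h
    have : #S ∈ (Icc 1 (n - 1)).erase #S' :=
      mem_erase.2 ⟨hne, card_mem_Icc_of_exists_lt hS.1 hasc⟩
    simp [← h] at this
  have h := congrArg (List.take #S) heq
  rw [splitWord, splitWord, List.take_left' (length_sort _), hc,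
    List.take_left' (length_sort _)] at h
  rw [← sort_toFinset S (· ≥ ·), h, sort_toFinset]

end SplitWords

section Counting

lemma card_filter_powerset_insert {α : Type*} [DecidableEq α] (P : Finset α → Prop)
    [DecidablePred P] {s : Finset α} {a : α} (ha : a ∉ s) :
    #{t ∈ (insert a s).powerset | P t} =
      #{t ∈ s.powerset | P t} + #{t ∈ s.powerset | P (insert a t)} := by
  simp only [card_filter, sum_powerset_insert ha]

lemma card_filter_powerset_Icc_succ (P : Finset ℕ → Prop) [DecidablePred P] (n : ℕ) :
    #{S ∈ (Icc 1 (n + 1)).powerset | P S} =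
      #{S ∈ (Icc 1 n).powerset | P S} + #{S ∈ (Icc 1 n).powerset | P (insert (n + 1) S)} := by
  rw [← insert_Icc_right_eq_Icc_add_one (by omega), card_filter_powerset_insert P (by simp)]

lemma card_filter_powerset_eq_empty (s : Finset ℕ) : #{S ∈ s.powerset | S = ∅} = 1 := by
  simp [filter_eq']

variable {n : ℕ} {S : Finset ℕ}

lemma succ_notMem_of_subset_Icc (hS : S ⊆ Icc 1 n) : n + 1 ∉ S :=
  fun h => by simpa using hS h

lemma Icc_succ_sdiff_insert :
    Icc 1 (n + 1) \ insert (n + 1) S = Icc 1 n \ S := by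
  rw [← insert_Icc_right_eq_Icc_add_one (by omega), insert_sdiff_insert,
    sdiff_insert_of_notMem (by simp)]

lemma Icc_succ_sdiff (hS : S ⊆ Icc 1 n) :
    Icc 1 (n + 1) \ S = insert (n + 1) (Icc 1 n \ S) := by
  rw [← insert_Icc_right_eq_Icc_add_one (by omega),
    insert_sdiff_of_notMem _ (succ_notMem_of_subset_Icc hS)]

lemma liesAbove_insert_succ_left_iff {B : Finset ℕ} (hB : B ⊆ Icc 1 n) :
    LiesAbove (insert (n + 1) S) B ↔ LiesAbove S B := by
  refine ⟨fun h => h.mono (subset_insert _ _) subset_rfl, fun h a ha b hb => ?_⟩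
  rcases mem_insert.1 ha with rfl | ha
  · simpa using (mem_Icc.1 (hB hb)).2
  · exact h a ha b hb

lemma liesAbove_insert_succ_right_iff (hS : S ⊆ Icc 1 n) {B : Finset ℕ} :
    LiesAbove S (insert (n + 1) B) ↔ S = ∅ := by
  refine ⟨fun h => eq_empty_of_forall_notMem fun a ha => ?_, fun h => by simp [h, LiesAbove]⟩
  have := h a ha (n + 1) (mem_insert_self _ _)
  have := (mem_Icc.1 (hS ha)).2
  omega

lemma card_filter_card_le_one (n : ℕ) : #{S ∈ (Icc 1 n).powerset | #S ≤ 1} = n + 1 := by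
  induction n with
  | zero => rfl
  | succ n ih =>
    have hins : {S ∈ (Icc 1 n).powerset | #(insert (n + 1) S) ≤ 1} =
        {S ∈ (Icc 1 n).powerset | S = ∅} := filter_congr fun S hS => by
      rw [card_insert_of_notMem (succ_notMem_of_subset_Icc (mem_powerset.1 hS))]
      simp
    rw [card_filter_powerset_Icc_succ, hins, ih, card_filter_powerset_eq_empty]

lemma card_filter_liesAbove (n : ℕ) :
    #{S ∈ (Icc 1 n).powerset | LiesAbove S (Icc 1 n \ S)} = n + 1 := by
  induction n with
  | zero => rfl
  | succ n ih =>
    have hout : {S ∈ (Icc 1 n).powerset | LiesAbove S (Icc 1 (n + 1) \ S)} =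
        {S ∈ (Icc 1 n).powerset | S = ∅} := filter_congr fun S hS => by
      rw [Icc_succ_sdiff (mem_powerset.1 hS), liesAbove_insert_succ_right_iff (mem_powerset.1 hS)]
    have hins : {S ∈ (Icc 1 n).powerset |
          LiesAbove (insert (n + 1) S) (Icc 1 (n + 1) \ insert (n + 1) S)} =
        {S ∈ (Icc 1 n).powerset | LiesAbove S (Icc 1 n \ S)} := filter_congr fun S hS => by
      rw [Icc_succ_sdiff_insert, liesAbove_insert_succ_left_iff sdiff_subset]
    rw [card_filter_powerset_Icc_succ, hout, hins, ih, card_filter_powerset_eq_empty, add_comm]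

lemma isNearTop_succ_insert_iff (hn : 1 ≤ n) (hS : S ⊆ Icc 1 n) :
    IsNearTop (n + 1) (insert (n + 1) S) ↔ IsNearTop n S := by
  have hnS := succ_notMem_of_subset_Icc hS
  simp only [IsNearTop, Icc_succ_sdiff_insert]
  constructor
  · rintro ⟨x, hx, h⟩
    obtain rfl | hxn := eq_or_ne x (n + 1)
    · rw [erase_insert hnS, erase_eq_of_notMem (by simp)] at h
      exact ⟨1, by simp [hn], h.mono (erase_subset _ _) (erase_subset _ _)⟩
    · rw [erase_insert_of_ne hxn.symm] at h
      exact ⟨x, by simp at hx ⊢; omega, h.mono (subset_insert _ _) subset_rfl⟩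
  · rintro ⟨x, hx, h⟩
    refine ⟨x, by simp at hx ⊢; omega, ?_⟩
    rw [erase_insert_of_ne (by simp at hx; omega)]
    exact (liesAbove_insert_succ_left_iff ((erase_subset _ _).trans sdiff_subset)).2 h

lemma isNearTop_succ_iff (hS : S ⊆ Icc 1 n) :
    IsNearTop (n + 1) S ↔ LiesAbove S (Icc 1 n \ S) ∨ #S ≤ 1 := by
  have hnS := succ_notMem_of_subset_Icc hS
  have hnT : n + 1 ∉ Icc 1 n \ S := by simp
  simp only [IsNearTop, Icc_succ_sdiff hS]
  constructor
  · rintro ⟨x, hx, h⟩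
    obtain rfl | hxn := eq_or_ne x (n + 1)
    · rw [erase_insert hnT, erase_eq_of_notMem hnS] at h
      exact Or.inl h
    · rw [erase_insert_of_ne hxn.symm,
        liesAbove_insert_succ_right_iff ((erase_subset _ _).trans hS)] at h
      have := pred_card_le_card_erase (s := S) (a := x)
      rw [h, card_empty] at this
      exact Or.inr (by omega)
  · rintro (h | h)
    · exact ⟨n + 1, by simp, by rwa [erase_insert hnT, erase_eq_of_notMem hnS]⟩
    · obtain rfl | ⟨x, hx⟩ := S.eq_empty_or_nonempty
      · exact ⟨n + 1, by simp, by simp [LiesAbove]⟩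
      · have := mem_Icc.1 (hS hx)
        refine ⟨x, mem_Icc.2 ⟨this.1, by omega⟩, fun a ha => ?_⟩
        have : #(S.erase x) = 0 := by rw [card_erase_of_mem hx]; omega
        simp [card_eq_zero.1 this] at ha

lemma card_filter_liesAbove_or_card_le_one (hn : 1 ≤ n) :
    #{S ∈ (Icc 1 n).powerset | LiesAbove S (Icc 1 n \ S) ∨ #S ≤ 1} = 2 * n := by
  obtain ⟨m, rfl⟩ : ∃ m, n = m + 1 := ⟨n - 1, by omega⟩
  have hout : {S ∈ (Icc 1 m).powerset | LiesAbove S (Icc 1 (m + 1) \ S) ∨ #S ≤ 1} =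
      {S ∈ (Icc 1 m).powerset | #S ≤ 1} := filter_congr fun S hS => by
    rw [Icc_succ_sdiff (mem_powerset.1 hS), liesAbove_insert_succ_right_iff (mem_powerset.1 hS)]
    exact ⟨fun h => h.elim (fun h => by simp [h]) id, Or.inr⟩
  have hins : {S ∈ (Icc 1 m).powerset | LiesAbove (insert (m + 1) S)
        (Icc 1 (m + 1) \ insert (m + 1) S) ∨ #(insert (m + 1) S) ≤ 1} =
      {S ∈ (Icc 1 m).powerset | LiesAbove S (Icc 1 m \ S)} := filter_congr fun S hS => by
    rw [Icc_succ_sdiff_insert, liesAbove_insert_succ_left_iff sdiff_subset,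
      card_insert_of_notMem (succ_notMem_of_subset_Icc (mem_powerset.1 hS))]
    exact ⟨fun h => h.elim id fun h => by simp [show S = ∅ by simpa using h, LiesAbove],
      Or.inl⟩
  rw [card_filter_powerset_Icc_succ, hout, hins, card_filter_card_le_one, card_filter_liesAbove]
  ring

theorem card_filter_isNearTop (hn : 1 ≤ n) :
    #{S ∈ (Icc 1 n).powerset | IsNearTop n S} + n = n * n + 2 := by
  induction n, hn using Nat.le_induction with
  | base => decide
  | succ n hn ih =>
    have hout : {S ∈ (Icc 1 n).powerset | IsNearTop (n + 1) S} =
        {S ∈ (Icc 1 n).powerset | LiesAbove S (Icc 1 n \ S) ∨ #S ≤ 1} :=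
      filter_congr fun S hS => isNearTop_succ_iff (mem_powerset.1 hS)
    have hins : {S ∈ (Icc 1 n).powerset | IsNearTop (n + 1) (insert (n + 1) S)} =
        {S ∈ (Icc 1 n).powerset | IsNearTop n S} :=
      filter_congr fun S hS => isNearTop_succ_insert_iff hn (mem_powerset.1 hS)
    rw [card_filter_powerset_Icc_succ, hout, hins, card_filter_liesAbove_or_card_le_one hn]
    linarith

end Counting

theorem minimalPerms_eq_image {n : ℕ} (hn : 3 ≤ n) :
    minimalPerms (n - 2) n = splitWord n '' ↑{S ∈ (Icc 1 n).powerset | ¬IsNearTop n S} := by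
  ext w
  simp only [minimalPerms, Set.mem_ofPred_eq, coe_filter, mem_powerset, Set.mem_image]
  constructor
  · rintro ⟨hw, hmin⟩
    obtain ⟨S, hS, rfl⟩ := exists_eq_splitWord hw (by rw [hmin.1]; omega)
    exact ⟨S, ⟨hS, (minimalPerm_splitWord_iff hn hS).1 hmin⟩, rfl⟩
  · rintro ⟨S, ⟨hS, hgood⟩, rfl⟩
    exact ⟨isPermWord_splitWord hS, (minimalPerm_splitWord_iff hn hS).2 hgood⟩

/-- for `n ≥ 3`, `f_{n-2}(n) = 2^n - n(n-1) - 2`. -/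
theorem fCount_n_sub_two (n : ℕ) (hn : 3 ≤ n) :
    (fCount (n - 2) n : ℤ) = 2 ^ n - (n : ℤ) * ((n : ℤ) - 1) - 2 := by
  have hcount : fCount (n - 2) n = #{S ∈ (Icc 1 n).powerset | ¬IsNearTop n S} := by
    rw [fCount, minimalPerms_eq_image hn, (splitWord_injOn (by omega)).ncard_image,
      Set.ncard_coe_finset]
  have hsplit := card_filter_add_card_filter_not (s := (Icc 1 n).powerset) (IsNearTop n)
  rw [card_powerset, Nat.card_Icc, Nat.add_sub_cancel] at hsplit
  have hnear := card_filter_isNearTop (by omega : 1 ≤ n)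
  rw [hcount]
  zify at hsplit hnear
  linear_combination hsplit - hnear
end
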